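/- Assume the Continuum Hypothesis. Let X be a locally compact, locally countable Hausdorff topological space such that every closed subspace of X of cardinality at most ℵ₁ is paracompact. Then X has the Moving Off Property. -/

import Mathlib

open Set Topology

/-- A family of sets indexed by `ι` is *discrete* if every point has a neighborhood
meeting at most one member of the family. -/
def IsDiscreteFamily {ι X : Type*} [TopologicalSpace X] (U : ι → Set X) : Prop :=
  ∀ x : X, ∃ V ∈ nhds x, {i : ι | (U i ∩ V).Nonempty}.Subsingleton

/-- A *moving off collection* for `X`: a family of nonempty compact sets such that every
compact set is disjoint from some member of the family. -/
def IsMovingOff {X : Type*} [TopologicalSpace X] (𝒦 : Set (Set X)) : Prop :=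
  (∀ K ∈ 𝒦, K.Nonempty) ∧ (∀ K ∈ 𝒦, IsCompact K) ∧
    ∀ L : Set X, IsCompact L → ∃ K ∈ 𝒦, Disjoint K L

/-- The *Moving Off Property*: every moving off collection contains an infinite subfamily
of pairwise distinct sets admitting a discrete open expansion. -/
def HasMOP (X : Type*) [TopologicalSpace X] : Prop :=
  ∀ 𝒦 : Set (Set X), IsMovingOff 𝒦 →
    ∃ K : ℕ → Set X, (∀ n, K n ∈ 𝒦) ∧ Function.Injective K ∧
      ∃ U : ℕ → Set X, (∀ n, IsOpen (U n)) ∧ (∀ n, K n ⊆ U n) ∧ IsDiscreteFamily U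

/-- A space is *locally countable* if every point has a countable neighborhood. -/
def LocallyCountable (X : Type*) [TopologicalSpace X] : Prop :=
  ∀ x : X, ∃ N ∈ nhds x, N.Countable

/-!
Under CH, a closing-off argument of length `ω₁` turns a moving off collection `𝒦` into a clopen
set `Y` of cardinality `ℵ₁` on which `𝒦` still moves off: compact sets are countable, and a set
of size `ℵ₁` has only `ℵ₁ ^ ℵ₀ = 𝔠 = ℵ₁` countable subsets. By hypothesis `Y` is paracompact, and
a locally compact paracompact space has the MOP: stars of a locally finite cover by relatively
compact open sets give compact sets `C₀ ⊆ C₁ ⊆ ⋯` with clopen union and members `Kₙ ∈ 𝒦` missing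
`Cₙ` with `Cₙ ∪ Kₙ ⊆ int Cₙ₊₁`; the rings `int C₂ₙ₊₁ \ C₂ₙ` expand the `K₂ₙ` discretely.
-/

universe u v

open Function

section Cardinal

open Cardinal Ordinal

theorem Cardinal.continuum_eq_aleph_one_congr :
    (𝔠 : Cardinal.{u}) = ℵ₁ ↔ (𝔠 : Cardinal.{v}) = ℵ₁ := by
  rw [← lift_inj.{u, v}, lift_continuum, lift_aleph, Ordinal.lift_one,
    ← lift_inj.{v, u}, lift_continuum, lift_aleph, Ordinal.lift_one]

variable {α : Type u}

theorem Cardinal.mk_iUnion_le_of_le {ι : Type u} {f : ι → Set α} {κ : Cardinal.{u}}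
    (hκ : ℵ₀ ≤ κ) (hι : #ι ≤ κ) (hf : ∀ i, #(f i) ≤ κ) : #(⋃ i, f i) ≤ κ :=
  (mk_iUnion_le f).trans <| (mul_le_mul' hι (ciSup_le' hf)).trans (mul_eq_self hκ).le

theorem Cardinal.mk_countable_subsets_le_aleph_one (CH : (𝔠 : Cardinal.{u}) = ℵ₁) {A : Set α}
    (hA : #A ≤ ℵ₁) :
    #{S : Set α // S ⊆ A ∧ S.Countable} ≤ ℵ₁ := by
  simp_rw [← le_aleph0_iff_set_countable]
  calc #{S : Set α // S ⊆ A ∧ #S ≤ ℵ₀} ≤ max #A ℵ₀ ^ ℵ₀ := mk_bounded_subset_le A ℵ₀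
    _ ≤ 𝔠 ^ ℵ₀ := power_le_power_right ((max_le hA (aleph0_le_aleph 1)).trans CH.ge)
    _ = ℵ₁ := continuum_power_aleph0.trans CH

theorem Ordinal.mk_toType_omega_one : #(ω₁ : Ordinal.{u}).ToType = ℵ₁ := by
  rw [mk_toType, card_omega]

theorem Ordinal.exists_forall_lt_of_countable {s : Set (ω₁ : Ordinal.{u}).ToType}
    (hs : s.Countable) : ∃ i, ∀ j ∈ s, j < i := by
  refine not_isCofinal_iff.1 fun hcof => ?_
  have := (Order.cof_le hcof).trans (le_aleph0_iff_set_countable.2 hs)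
  rw [cof_toType, cof_omega_one] at this
  exact aleph0_lt_aleph_one.not_ge this

noncomputable def countableClosureStage (F : Set α → Set α) :
    (ω₁ : Ordinal.{u}).ToType → Set α
  | i => ⋃ S : {S : Set α // S ⊆ ⋃ j : Iio i, countableClosureStage F j ∧ S.Countable ∧
      (F S).Countable}, F S
termination_by i => i
decreasing_by exact j.2

theorem mk_countableClosureStage_le (CH : (𝔠 : Cardinal.{u}) = ℵ₁) (F : Set α → Set α)
    (i : (ω₁ : Ordinal.{u}).ToType) : #(countableClosureStage F i) ≤ ℵ₁ := by
  induction i using WellFoundedLT.induction with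
  | _ i IH =>
    have hprev : #(⋃ j : Iio i, countableClosureStage F j) ≤ ℵ₁ :=
      mk_iUnion_le_of_le (aleph0_le_aleph 1) ((mk_set_le _).trans mk_toType_omega_one.le)
        fun j => IH j j.2
    rw [countableClosureStage]
    refine mk_iUnion_le_of_le (aleph0_le_aleph 1) ?_ fun S =>
      (le_aleph0_iff_set_countable.2 S.2.2.2).trans (aleph0_le_aleph 1)
    exact (mk_subtype_mono fun S hS => ⟨hS.1, hS.2.1⟩).trans
      (mk_countable_subsets_le_aleph_one CH hprev)

theorem exists_mk_le_aleph_one_countably_closed (CH : (𝔠 : Cardinal.{u}) = ℵ₁)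
    (F : Set α → Set α) :
    ∃ Y : Set α, #Y ≤ ℵ₁ ∧ ∀ S ⊆ Y, S.Countable → (F S).Countable → F S ⊆ Y := by
  refine ⟨⋃ i, countableClosureStage F i, mk_iUnion_le_of_le (aleph0_le_aleph 1)
    mk_toType_omega_one.le (mk_countableClosureStage_le CH F), fun S hSY hS hFS => ?_⟩
  choose g hg using fun x : S => mem_iUnion.1 (hSY x.2)
  have := hS.to_subtype
  -- `ω₁` has uncountable cofinality, so `S` already lies below some stage `i`.
  obtain ⟨i, hi⟩ := exists_forall_lt_of_countable (countable_range g)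
  have hSi : S ⊆ ⋃ j : Iio i, countableClosureStage F j := fun x hx =>
    mem_iUnion.2 ⟨⟨g ⟨x, hx⟩, hi _ (mem_range_self _)⟩, hg _⟩
  refine subset_iUnion_of_subset i ?_
  rw [countableClosureStage]
  exact subset_iUnion_of_subset ⟨S, hSi, hS, hFS⟩ subset_rfl

end Cardinal

section Topology

open Cardinal TopologicalSpace

variable {X : Type u} [TopologicalSpace X]

def HasDiscretelyExpandableSeq (𝒦 : Set (Set X)) : Prop :=
  ∃ K : ℕ → Set X, (∀ n, K n ∈ 𝒦) ∧ Function.Injective K ∧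
    ∃ U : ℕ → Set X, (∀ n, IsOpen (U n)) ∧ (∀ n, K n ⊆ U n) ∧ IsDiscreteFamily U

theorem LocallyFinite.isDiscreteFamily {ι : Type*} {U : ι → Set X} (hU : LocallyFinite U)
    (hd : Pairwise (Disjoint on fun i => closure (U i))) : IsDiscreteFamily U := by
  intro x
  refine ⟨_, hU.closure.iInter_compl_mem_nhds (fun _ => isClosed_closure) x, ?_⟩
  have hx_mem : ∀ i, (U i ∩ ⋂ i, ⋂ (_ : x ∉ closure (U i)), (closure (U i))ᶜ).Nonempty →
      x ∈ closure (U i) := by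
    rintro i ⟨y, hyU, hyW⟩
    by_contra hx
    exact mem_iInter₂.1 hyW i hx (subset_closure hyU)
  intro i hi j hj
  by_contra hij
  exact (hd hij).ne_of_mem (hx_mem i hi) (hx_mem j hj) rfl

section Exhaustion

variable {C : ℕ → Set X}

theorem locallyFinite_diff_of_subset_interior (hC : ∀ n, C n ⊆ interior (C (n + 1)))
    (hZ : IsClosed (⋃ n, C n)) : LocallyFinite fun n => C (n + 1) \ C n := by
  have hmono : Monotone C := monotone_nat_of_le_succ fun n => (hC n).trans interior_subset
  intro x
  by_cases hx : x ∈ ⋃ n, C n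
  · obtain ⟨m, hm⟩ := mem_iUnion.1 hx
    refine ⟨_, isOpen_interior.mem_nhds (hC m hm), (finite_Iio (m + 1)).subset ?_⟩
    rintro n ⟨y, ⟨-, hyn⟩, hym⟩
    by_contra! hn
    exact hyn (hmono (not_lt.1 hn) (interior_subset hym))
  · refine ⟨_, hZ.isOpen_compl.mem_nhds hx, ?_⟩
    convert finite_empty
    refine eq_empty_of_forall_notMem ?_
    rintro n ⟨y, ⟨hy, -⟩, hyZ⟩
    exact hyZ (mem_iUnion_of_mem _ hy)

theorem hasDiscretelyExpandableSeq_of_exhaustion {𝒦 : Set (Set X)} {K : ℕ → Set X}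
    (hC : ∀ n, IsClosed (C n)) (hCK : ∀ n, C n ∪ K n ⊆ interior (C (n + 1)))
    (hZ : IsClosed (⋃ n, C n)) (hK𝒦 : ∀ n, K n ∈ 𝒦) (hK : ∀ n, (K n).Nonempty)
    (hKC : ∀ n, Disjoint (K n) (C n)) : HasDiscretelyExpandableSeq 𝒦 := by
  have hCC : ∀ n, C n ⊆ interior (C (n + 1)) := fun n => subset_union_left.trans (hCK n)
  have hmono : Monotone C := monotone_nat_of_le_succ fun n => (hCC n).trans interior_subset
  have hKne : ∀ m n, m < n → K m ≠ K n := by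
    intro m n hmn hKmn
    have hKm : K m ⊆ C n :=
      (subset_union_right.trans (hCK m)).trans (interior_subset.trans (hmono hmn))
    obtain ⟨x, hx⟩ := hK n
    exact (hKC n).ne_of_mem hx (hKm (hKmn ▸ hx)) rfl
  have hKinj : Injective K := fun m n h =>
    le_antisymm (not_lt.1 fun hlt => hKne _ _ hlt h.symm) (not_lt.1 fun hlt => hKne _ _ hlt h)
  -- Taking every other ring leaves the gap `C (2n+1) ⊆ int C (2n+2)`, which separates closures.
  let U n := interior (C (2 * n + 1)) \ C (2 * n)
  have hUlf : LocallyFinite U :=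
    ((locallyFinite_diff_of_subset_interior hCC hZ).comp_injective
      (mul_right_injective₀ two_ne_zero)).subset fun n => sdiff_subset_sdiff_left interior_subset
  have hUdisj : Pairwise (Disjoint on fun n => closure (U n)) := by
    refine (pairwise_disjoint_on _).2 fun m n hmn => ?_
    have hUm : closure (U m) ⊆ interior (C (2 * n)) :=
      (closure_minimal (sdiff_subset.trans interior_subset) (hC _)).trans
        ((hCC _).trans (interior_mono (hmono (by omega))))
    refine Disjoint.mono_left hUm (Disjoint.closure_left ?_ isOpen_interior).symm
    exact disjoint_sdiff_left.mono_right interior_subset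
  refine ⟨fun n => K (2 * n), fun n => hK𝒦 _, hKinj.comp (mul_right_injective₀ two_ne_zero),
    U, fun n => isOpen_interior.sdiff (hC _), fun n => ?_, hUlf.isDiscreteFamily hUdisj⟩
  exact subset_sdiff.2 ⟨subset_union_right.trans (hCK _), hKC _⟩

end Exhaustion

theorem hasDiscretelyExpandableSeq_of_absorbing_enlargement [T2Space X] {𝒦 : Set (Set X)}
    (h𝒦 : IsMovingOff 𝒦) (grow : Compacts X → Compacts X)
    (hgrow : ∀ L : Compacts X, (L : Set X) ⊆ interior (grow L))
    (habs : ∀ x, ∃ W ∈ 𝓝 x, ∀ L : Compacts X, (W ∩ L).Nonempty → W ⊆ (grow L : Set X)) :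
    HasDiscretelyExpandableSeq 𝒦 := by
  choose pick hpick𝒦 hpickL using fun L : Compacts X => h𝒦.2.2 L L.isCompact
  let next (L : Compacts X) : Compacts X := grow (L ⊔ ⟨pick L, h𝒦.2.1 _ (hpick𝒦 L)⟩)
  let C (n : ℕ) : Compacts X := next^[n] ⊥
  have hC : ∀ n, C (n + 1) = next (C n) := fun n => iterate_succ_apply' next n ⊥
  have hCK : ∀ n, (C n : Set X) ∪ pick (C n) ⊆ interior (C (n + 1)) := fun n => by
    rw [hC]; exact hgrow (C n ⊔ ⟨pick (C n), h𝒦.2.1 _ (hpick𝒦 _)⟩)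
  refine hasDiscretelyExpandableSeq_of_exhaustion (C := fun n => C n)
    (fun n => (C n).isCompact.isClosed) hCK ?_ (fun n => hpick𝒦 _)
    (fun n => h𝒦.1 _ (hpick𝒦 _)) (fun n => hpickL _)
  refine isClosed_of_closure_subset fun x hx => ?_
  obtain ⟨W, hW, hWL⟩ := habs x
  obtain ⟨y, hyW, hyC⟩ := mem_closure_iff_nhds.1 hx W hW
  obtain ⟨n, hyn⟩ := mem_iUnion.1 hyC
  have hWC : W ⊆ C (n + 1) := hC n ▸ hWL _ ⟨y, hyW, Or.inl hyn⟩
  exact mem_iUnion_of_mem (n + 1) (hWC (mem_of_mem_nhds hW))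

theorem exists_absorbing_compacts_enlargement [T2Space X] [LocallyCompactSpace X]
    [ParacompactSpace X] :
    ∃ grow : Compacts X → Compacts X, (∀ L : Compacts X, (L : Set X) ⊆ interior (grow L)) ∧
      ∀ x, ∃ W ∈ 𝓝 x, ∀ L : Compacts X, (W ∩ L).Nonempty → W ⊆ (grow L : Set X) := by
  choose K hK hKx using fun x : X => exists_compact_mem_nhds x
  obtain ⟨V, hVo, hVcover, hVlf, hVK⟩ := precise_refinement (fun x => interior (K x))
    (fun _ => isOpen_interior)
    (iUnion_eq_univ_iff.2 fun x => ⟨x, mem_interior_iff_mem_nhds.2 (hKx x)⟩)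
  let star (L : Set X) : Set X := ⋃ x ∈ {x | (V x ∩ L).Nonempty}, V x
  have hstar : ∀ L : Compacts X, IsCompact (closure (star L)) := fun L =>
    ((hVlf.finite_nonempty_inter_compact L.isCompact).isCompact_biUnion
      fun x _ => hK x).closure_of_subset (iUnion₂_mono fun x _ => (hVK x).trans interior_subset)
  refine ⟨fun L => ⟨closure (star L), hstar L⟩, fun L y hy => ?_, fun x => ?_⟩
  · obtain ⟨z, hz⟩ := iUnion_eq_univ_iff.1 hVcover y
    refine interior_mono subset_closure ((isOpen_biUnion fun x _ => hVo x).subset_interior_iff.2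
      subset_rfl (mem_biUnion ⟨y, hz, hy⟩ hz))
  · obtain ⟨z, hz⟩ := iUnion_eq_univ_iff.1 hVcover x
    exact ⟨V z, (hVo z).mem_nhds hz, fun L hL =>
      (subset_biUnion_of_mem (u := V) (show z ∈ {x | (V x ∩ L).Nonempty} from hL)).trans
        subset_closure⟩

theorem hasMOP_of_paracompactSpace [T2Space X] [LocallyCompactSpace X] [ParacompactSpace X] :
    HasMOP X := fun _ h𝒦 =>
  let ⟨_, hgrow, habs⟩ := exists_absorbing_compacts_enlargement (X := X)
  hasDiscretelyExpandableSeq_of_absorbing_enlargement h𝒦 _ hgrow habs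

def IsMovingOffWithin (𝒦 : Set (Set X)) (Y : Set X) : Prop :=
  ∀ L ⊆ Y, IsCompact L → ∃ K ∈ 𝒦, K ⊆ Y ∧ Disjoint K L

theorem IsDiscreteFamily.image_val {Y : Set X} (hY : IsClopen Y) {ι : Type*} {U : ι → Set Y}
    (hU : IsDiscreteFamily U) : IsDiscreteFamily fun i => ((↑) '' U i : Set X) := by
  intro x
  by_cases hx : x ∈ Y
  · obtain ⟨V, hV, hVU⟩ := hU ⟨x, hx⟩
    refine ⟨(↑) '' V, hY.isOpen.isOpenMap_subtype_val.image_mem_nhds hV, fun i hi j hj => ?_⟩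
    simp only [← image_inter Subtype.val_injective, image_nonempty] at hi hj
    exact hVU hi hj
  · refine ⟨Yᶜ, hY.isClosed.isOpen_compl.mem_nhds hx, fun i hi => ?_⟩
    obtain ⟨_, ⟨y, -, rfl⟩, hy⟩ := hi
    exact (hy y.2).elim

theorem IsClopen.hasDiscretelyExpandableSeq {Y : Set X} (hY : IsClopen Y) (hMOP : HasMOP Y)
    {𝒦 : Set (Set X)} (h𝒦 : IsMovingOff 𝒦) (hY𝒦 : IsMovingOffWithin 𝒦 Y) :
    HasDiscretelyExpandableSeq 𝒦 := by
  have htrace : IsMovingOff {K : Set Y | (↑) '' K ∈ 𝒦} := by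
    refine ⟨fun K hK => image_nonempty.1 (h𝒦.1 _ hK),
      fun K hK => Subtype.isCompact_iff.2 (h𝒦.2.1 _ hK), fun L hL => ?_⟩
    obtain ⟨K, hK, hKY, hKL⟩ := hY𝒦 _ (Subtype.coe_image_subset Y L) (Subtype.isCompact_iff.1 hL)
    have hK' : (↑) '' ((↑) ⁻¹' K : Set Y) = K :=
      image_preimage_eq_of_subset (hKY.trans Subtype.range_coe.symm.subset)
    refine ⟨(↑) ⁻¹' K, by rwa [mem_ofPred_eq, hK'], ?_⟩
    rwa [← disjoint_image_iff Subtype.val_injective, hK']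
  obtain ⟨K, hK𝒦, hKinj, U, hUo, hKU, hU⟩ := hMOP _ htrace
  exact ⟨fun n => Subtype.val '' K n, hK𝒦, (image_injective.2 Subtype.val_injective).comp hKinj,
    fun n => Subtype.val '' U n, fun n => hY.isOpen.isOpenMap_subtype_val _ (hUo n),
    fun n => image_mono (hKU n), hU.image_val hY⟩

theorem LocallyCountable.countable_of_isCompact (hlc : LocallyCountable X) {K : Set X}
    (hK : IsCompact K) : K.Countable := by
  choose N hN hNc using hlc
  obtain ⟨t, -, ht⟩ := hK.elim_nhds_subcover N fun x _ => hN x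
  exact (t.countable_toSet.biUnion fun x _ => hNc x).mono ht

theorem exists_isClopen_mk_le_aleph_one_isMovingOffWithin [T2Space X] [LocallyCompactSpace X]
    (CH : (𝔠 : Cardinal.{u}) = ℵ₁) (hlc : LocallyCountable X) {𝒦 : Set (Set X)}
    (h𝒦 : IsMovingOff 𝒦) : ∃ Y : Set X, IsClopen Y ∧ #Y ≤ ℵ₁ ∧ IsMovingOffWithin 𝒦 Y := by
  choose c hc hcx using fun x : X => exists_compact_mem_nhds x
  have hkk : ∀ L : Set X, ∃ K, IsCompact K ∧ (IsCompact L → K ∈ 𝒦 ∧ Disjoint K L) := by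
    intro L
    by_cases hL : IsCompact L
    · obtain ⟨K, hK, hKL⟩ := h𝒦.2.2 L hL
      exact ⟨K, h𝒦.2.1 K hK, fun _ => ⟨hK, hKL⟩⟩
    · exact ⟨∅, isCompact_empty, fun h => (hL h).elim⟩
  choose kk hkkc hkk using hkk
  -- The three parts of `F` make `Y` closed, open, and a set on which `𝒦` moves off.
  let F (S : Set X) : Set X := closure S ∪ (⋃ x ∈ S, c x) ∪ kk S
  have hF : ∀ S, S.Countable → (closure S).Countable → (F S).Countable := fun S hS hcl =>
    (hcl.union (hS.biUnion fun x _ => hlc.countable_of_isCompact (hc x))).union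
      (hlc.countable_of_isCompact (hkkc S))
  obtain ⟨Y, hYcard, hY⟩ := exists_mk_le_aleph_one_countably_closed CH F
  have hcY : ∀ x ∈ Y, c x ⊆ Y := by
    intro x hx
    have hx' := countable_singleton x
    have hcF : c x ⊆ F {x} :=
      (subset_biUnion_of_mem (u := c) (mem_singleton x)).trans
        (subset_union_right.trans subset_union_left)
    refine hcF.trans (hY {x} (singleton_subset_iff.2 hx) hx' (hF _ hx' ?_))
    rwa [closure_singleton]
  have hYopen : IsOpen Y :=
    isOpen_iff_mem_nhds.2 fun x hx => Filter.mem_of_superset (hcx x) (hcY x hx)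
  have hYclosed : IsClosed Y := by
    refine isClosed_of_closure_subset fun x hx => ?_
    have hScl : closure (Y ∩ c x) ⊆ c x := closure_minimal inter_subset_right (hc x).isClosed
    have hSc : (closure (Y ∩ c x)).Countable := (hlc.countable_of_isCompact (hc x)).mono hScl
    have hxS : x ∈ closure (Y ∩ c x) := by
      rw [mem_closure_iff_nhdsWithin_neBot, ← nhdsWithin_restrict' _ (hcx x)]
      exact mem_closure_iff_nhdsWithin_neBot.1 hx
    exact hY _ inter_subset_left (hSc.mono subset_closure) (hF _ (hSc.mono subset_closure) hSc)
      (subset_union_left.trans subset_union_left hxS)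
  refine ⟨Y, ⟨hYclosed, hYopen⟩, hYcard, fun L hLY hL => ⟨kk L, (hkk L hL).1, ?_, (hkk L hL).2⟩⟩
  have hLc := hlc.countable_of_isCompact hL
  exact subset_union_right.trans (hY L hLY hLc (hF L hLc (by rwa [hL.isClosed.closure_eq])))

end Topology

/-- Corollary 16: under CH, if `X` is locally compact, locally countable, Hausdorff, and every
closed subspace of cardinality at most `ℵ₁` is paracompact, then `X` has the MOP. -/
theorem mop_of_small_closed_paracompact_CH (CH : Cardinal.continuum = Cardinal.aleph 1)
    (X : Type*) [TopologicalSpace X] [T2Space X] [LocallyCompactSpace X]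
    (hlc : LocallyCountable X)
    (h : ∀ Y : Set X, IsClosed Y → Cardinal.mk Y ≤ Cardinal.aleph 1 → ParacompactSpace Y) :
    HasMOP X := by
  intro 𝒦 h𝒦
  obtain ⟨Y, hY, hYcard, hY𝒦⟩ := exists_isClopen_mk_le_aleph_one_isMovingOffWithin
    (Cardinal.continuum_eq_aleph_one_congr.2 CH) hlc h𝒦
  have := h Y hY.isClosed hYcard
  have := hY.isOpen.locallyCompactSpace
  exact hY.hasDiscretelyExpandableSeq hasMOP_of_paracompactSpace h𝒦 hY𝒦
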